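/- Let h ≠ 0 and a₁² = 1. For the timelike helicoidal surface X(s,t) = (s cos t, s sin t, a₁ s + a₀ + ht), the identity H² - K = 0 holds: with W = EG - F² = -h², one has H₁² - 4W·K₁ = 0, where H₁ = G·det(X_s,X_t,X_ss) - 2F·det(X_s,X_t,X_st) + E·det(X_s,X_t,X_tt) and K₁ = det(X_s,X_t,X_ss)·det(X_s,X_t,X_tt) - det(X_s,X_t,X_st)². -/

import Mathlib

noncomputable section

/-- Lorentzian inner product on Minkowski 3-space. -/
def mink (u v : ℝ × ℝ × ℝ) : ℝ := u.1 * v.1 + u.2.1 * v.2.1 - u.2.2 * v.2.2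

/-- Determinant of the 3×3 matrix with columns `u,v,w`. -/
def det3 (u v w : ℝ × ℝ × ℝ) : ℝ :=
  u.1 * (v.2.1 * w.2.2 - v.2.2 * w.2.1)
    - u.2.1 * (v.1 * w.2.2 - v.2.2 * w.1)
    + u.2.2 * (v.1 * w.2.1 - v.2.1 * w.1)

/-- Partial derivative with respect to the first parameter. -/
def pd1 (X : ℝ → ℝ → ℝ × ℝ × ℝ) : ℝ → ℝ → ℝ × ℝ × ℝ := fun s t => deriv (fun u => X u t) s

/-- Partial derivative with respect to the second parameter. -/
def pd2 (X : ℝ → ℝ → ℝ × ℝ × ℝ) : ℝ → ℝ → ℝ × ℝ × ℝ := fun s t => deriv (fun u => X s u) t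

def Ecoef (X : ℝ → ℝ → ℝ × ℝ × ℝ) (s t : ℝ) : ℝ := mink (pd1 X s t) (pd1 X s t)
def Fcoef (X : ℝ → ℝ → ℝ × ℝ × ℝ) (s t : ℝ) : ℝ := mink (pd1 X s t) (pd2 X s t)
def Gcoef (X : ℝ → ℝ → ℝ × ℝ × ℝ) (s t : ℝ) : ℝ := mink (pd2 X s t) (pd2 X s t)

/-- `W = EG - F²`. -/
def Wform (X : ℝ → ℝ → ℝ × ℝ × ℝ) (s t : ℝ) : ℝ :=
  Ecoef X s t * Gcoef X s t - Fcoef X s t ^ 2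

/-- Numerator `H₁ = G·det(Xs,Xt,Xss) - 2F·det(Xs,Xt,Xst) + E·det(Xs,Xt,Xtt)`. -/
def H1 (X : ℝ → ℝ → ℝ × ℝ × ℝ) (s t : ℝ) : ℝ :=
  Gcoef X s t * det3 (pd1 X s t) (pd2 X s t) (pd1 (pd1 X) s t)
    - 2 * Fcoef X s t * det3 (pd1 X s t) (pd2 X s t) (pd2 (pd1 X) s t)
    + Ecoef X s t * det3 (pd1 X s t) (pd2 X s t) (pd2 (pd2 X) s t)

/-- `K₁ = det(Xs,Xt,Xss)·det(Xs,Xt,Xtt) - det(Xs,Xt,Xst)²`. -/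
def K1 (X : ℝ → ℝ → ℝ × ℝ × ℝ) (s t : ℝ) : ℝ :=
  det3 (pd1 X s t) (pd2 X s t) (pd1 (pd1 X) s t)
      * det3 (pd1 X s t) (pd2 X s t) (pd2 (pd2 X) s t)
    - det3 (pd1 X s t) (pd2 X s t) (pd2 (pd1 X) s t) ^ 2

/-- Mean curvature of a timelike surface (`ε = 1`, `W < 0`). -/
def Hmean (X : ℝ → ℝ → ℝ × ℝ × ℝ) (s t : ℝ) : ℝ :=
  -(1 / 2) * H1 X s t / (-(Wform X s t)) ^ ((3 : ℝ) / 2)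

/-- Gauss curvature `K = -K₁/W²`. -/
def Kcurv (X : ℝ → ℝ → ℝ × ℝ × ℝ) (s t : ℝ) : ℝ :=
  -(K1 X s t) / (Wform X s t) ^ 2

open Real

/-! The `s`-lines of the helicoid are straight lines with lightlike direction
`(cos t, sin t, a₁)`, so `E = 0` and `X_ss = 0`. For any such null ruled surface,
`W = -F²`, `H₁ = -2F·det(X_s,X_t,X_st)` and `K₁ = -det(X_s,X_t,X_st)²`, whence `H₁² = 4WK₁`. -/

theorem pd1_eq_of_hasDerivAt {X D : ℝ → ℝ → ℝ × ℝ × ℝ}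
    (hD : ∀ s t, HasDerivAt (fun u => X u t) (D s t) s) : pd1 X = D :=
  funext fun s => funext fun t => (hD s t).deriv

theorem pd2_eq_of_hasDerivAt {X D : ℝ → ℝ → ℝ × ℝ × ℝ}
    (hD : ∀ s t, HasDerivAt (fun u => X s u) (D s t) t) : pd2 X = D :=
  funext fun s => funext fun t => (hD s t).deriv

@[simp]
theorem det3_zero_right (u v : ℝ × ℝ × ℝ) : det3 u v 0 = 0 := by
  simp [det3]

theorem Wform_of_Ecoef_eq_zero {X : ℝ → ℝ → ℝ × ℝ × ℝ} {s t : ℝ} (hE : Ecoef X s t = 0) :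
    Wform X s t = -Fcoef X s t ^ 2 := by
  simp [Wform, hE]

theorem H1_sq_sub_four_mul_Wform_mul_K1_of_null_ruled {X : ℝ → ℝ → ℝ × ℝ × ℝ} {s t : ℝ}
    (hE : Ecoef X s t = 0) (hss : pd1 (pd1 X) s t = 0) :
    H1 X s t ^ 2 - 4 * Wform X s t * K1 X s t = 0 := by
  rw [Wform_of_Ecoef_eq_zero hE]
  simp only [H1, K1, hE, hss, det3_zero_right]
  ring

def helicoid (a₀ a₁ h s t : ℝ) : ℝ × ℝ × ℝ := (s * cos t, s * sin t, a₁ * s + a₀ + h * t)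

theorem pd1_helicoid (a₀ a₁ h : ℝ) :
    pd1 (helicoid a₀ a₁ h) = fun _ t => (cos t, sin t, a₁) :=
  pd1_eq_of_hasDerivAt fun s t => by
    simpa [helicoid] using ((hasDerivAt_id s).mul_const (cos t)).prodMk
      (((hasDerivAt_id s).mul_const (sin t)).prodMk
        ((((hasDerivAt_id s).const_mul a₁).add_const a₀).add_const (h * t)))

theorem pd2_helicoid (a₀ a₁ h : ℝ) :
    pd2 (helicoid a₀ a₁ h) = fun s t => (-(s * sin t), s * cos t, h) :=
  pd2_eq_of_hasDerivAt fun s t => by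
    simpa [helicoid] using ((hasDerivAt_cos t).const_mul s).prodMk
      (((hasDerivAt_sin t).const_mul s).prodMk
        (((hasDerivAt_id t).const_mul h).const_add (a₁ * s + a₀)))

theorem pd1_pd1_helicoid (a₀ a₁ h s t : ℝ) : pd1 (pd1 (helicoid a₀ a₁ h)) s t = 0 := by
  rw [pd1_helicoid]
  exact deriv_const s _

theorem Ecoef_helicoid (a₀ a₁ h s t : ℝ) (ha : a₁ ^ 2 = 1) :
    Ecoef (helicoid a₀ a₁ h) s t = 0 := by
  simp only [Ecoef, mink, pd1_helicoid]
  linear_combination sin_sq_add_cos_sq t - ha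

theorem Fcoef_helicoid (a₀ a₁ h s t : ℝ) : Fcoef (helicoid a₀ a₁ h) s t = -(a₁ * h) := by
  simp only [Fcoef, mink, pd1_helicoid, pd2_helicoid]
  ring

theorem stmt_15_general (h a₀ a₁ : ℝ) (ha : a₁ ^ 2 = 1) :
    let X : ℝ → ℝ → ℝ × ℝ × ℝ :=
      fun s t => (s * Real.cos t, s * Real.sin t, a₁ * s + a₀ + h * t)
    ∀ s t : ℝ, Wform X s t = -h ^ 2 ∧
      (H1 X s t) ^ 2 - 4 * Wform X s t * K1 X s t = 0 := by
  intro X s t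
  have hE : Ecoef (helicoid a₀ a₁ h) s t = 0 := Ecoef_helicoid a₀ a₁ h s t ha
  refine ⟨?_, H1_sq_sub_four_mul_Wform_mul_K1_of_null_ruled hE (pd1_pd1_helicoid a₀ a₁ h s t)⟩
  rw [show X = helicoid a₀ a₁ h from rfl, Wform_of_Ecoef_eq_zero hE, Fcoef_helicoid]
  linear_combination -h ^ 2 * ha

/-- For the timelike helicoidal surface `X(s,t) = (s cos t, s sin t, a₁s + a₀ + ht)`
with `a₁² = 1`, one has `W = EG - F² = -h²` and the identity `H₁² - 4W·K₁ = 0`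
(equivalently `H² - K = 0`). -/
theorem stmt_15 (h a₀ a₁ : ℝ) (hh : h ≠ 0) (ha : a₁ ^ 2 = 1) :
    let X : ℝ → ℝ → ℝ × ℝ × ℝ :=
      fun s t => (s * Real.cos t, s * Real.sin t, a₁ * s + a₀ + h * t)
    ∀ s t : ℝ, Wform X s t = -h ^ 2 ∧
      (H1 X s t) ^ 2 - 4 * Wform X s t * K1 X s t = 0 :=
  stmt_15_general h a₀ a₁ ha
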